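/- arXiv:1712.01245 — 2 statements merged into one kernel-verified Lean document; each statement's English description precedes it below -/
import Mathlib

section
/- For every 2-connected graph G on n ≥ 3 vertices and λ ∈ (0,1/2), the maximum over vertices u of t_λ(u) = Σ_{v≠u} d(u,v)·λ^{d(u,v)} is at least 2·Σ_{i=1}^{(n−1)/2} i·λ^i if n is odd, and at least 2·Σ_{i=1}^{(n−2)/2} i·λ^i + (n/2)·λ^{n/2} if n is even; equality holds when G is the cycle C_n. -/
/-!
With `g d = d * λ ^ d` we have `t_λ(u) = ∑_{v ≠ u} g (d(u,v))`, and `g` is decreasing on `d ≥ 1`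
once `λ ≤ 1/2`. Abel summation writes this sum as a combination, with nonnegative coefficients
`g k - g (k+1)`, of the ball sizes `#{v ≠ u | d(u,v) ≤ k}`, plus a term that only depends on `n`;
so a vertex with larger balls has the larger `t_λ`. In a 2-connected graph every sphere around `u`
of radius below the eccentricity of `u` has at least two points (a path from `u` to a farther vertex
avoiding one point of the sphere must cross it elsewhere), so the `k`-ball has at least
`min (2k) (n-1)` points besides `u`. On the cycle `d(u,v) = min j (n-j)` with `j = v - u`, and there
the count is at most `min (2k) (n-1)`.
-/

open SimpleGraph Finset

noncomputable def tExp {V : Type*} [Fintype V] (G : SimpleGraph V) (lam : ℝ) (u : V) : ℝ :=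
  letI := Classical.decEq V
  ∑ v ∈ Finset.univ.erase u, (G.dist u v : ℝ) * lam ^ (G.dist u v)

noncomputable def numSP {V : Type*} [Fintype V] (G : SimpleGraph V) (k l : V) : ℕ :=
  letI := Classical.decEq V
  letI := Classical.decRel G.Adj
  (G.finsetWalkLength (G.dist k l) k l).card

noncomputable def numSPedge {V : Type*} [Fintype V] (G : SimpleGraph V) (u v k l : V) : ℕ :=
  letI := Classical.decEq V
  letI := Classical.decRel G.Adj
  ((G.finsetWalkLength (G.dist k l) k l).filter (fun p => s(u, v) ∈ p.edges)).card

noncomputable def bExp {V : Type*} [Fintype V] (G : SimpleGraph V) (lam : ℝ) (u v : V) : ℝ :=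
  (1 / 2) * ∑ k : V, ∑ l : V, ((numSPedge G u v k l : ℝ) / (numSP G k l)) * lam ^ (G.dist k l)

noncomputable def cExp {V : Type*} [Fintype V] (G : SimpleGraph V) (lam : ℝ) (u : V) : ℝ :=
  letI := Classical.decRel G.Adj
  ∑ v ∈ G.neighborFinset u, bExp G lam u v

namespace Finset

theorem sum_Ico_sub_succ {M : Type*} [AddCommGroup M] (g : ℕ → M) {a b : ℕ} (hab : a ≤ b) :
    ∑ k ∈ Ico a b, (g k - g (k + 1)) = g a - g b := by
  have := sum_Ico_sub g hab
  rw [← neg_sub, ← this, ← sum_neg_distrib]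
  simp only [neg_sub]

theorem sum_comp_eq_sum_Icc_sub_mul_card_filter_le {α R : Type*} [CommRing R] (s : Finset α)
    (d : α → ℕ) (g : ℕ → R) {N : ℕ} (hd : ∀ a ∈ s, d a ∈ Icc 1 N) :
    ∑ a ∈ s, g (d a)
      = ∑ k ∈ Icc 1 N, (g k - g (k + 1)) * #{a ∈ s | d a ≤ k} + #s * g (N + 1) := by
  have telescope : ∀ a ∈ s,
      g (d a) = ∑ k ∈ Icc 1 N, (if d a ≤ k then g k - g (k + 1) else 0) + g (N + 1) := by
    intro a ha
    have hda := mem_Icc.mp (hd a ha)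
    have hIco : {k ∈ Icc 1 N | d a ≤ k} = Ico (d a) (N + 1) := by
      ext k; simp only [mem_filter, mem_Icc, mem_Ico]; omega
    rw [← sum_filter, hIco, sum_Ico_sub_succ g (by omega)]
    ring
  rw [sum_congr rfl telescope, sum_add_distrib, sum_comm, sum_const, nsmul_eq_mul]
  congr 1
  refine sum_congr rfl fun k _ => ?_
  rw [← sum_filter, sum_const, nsmul_eq_mul, mul_comm]

theorem sum_comp_le_sum_comp_of_card_filter_le {α β R : Type*} [CommRing R] [PartialOrder R]
    [IsOrderedRing R] {s : Finset α} {t : Finset β} {d : α → ℕ} {e : β → ℕ} {g : ℕ → R} {N : ℕ}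
    (hg : ∀ k ∈ Icc 1 N, g (k + 1) ≤ g k)
    (hd : ∀ a ∈ s, d a ∈ Icc 1 N) (he : ∀ b ∈ t, e b ∈ Icc 1 N) (hst : #s = #t)
    (hcount : ∀ k ∈ Icc 1 N, #{a ∈ s | d a ≤ k} ≤ #{b ∈ t | e b ≤ k}) :
    ∑ a ∈ s, g (d a) ≤ ∑ b ∈ t, g (e b) := by
  rw [sum_comp_eq_sum_Icc_sub_mul_card_filter_le s d g hd,
    sum_comp_eq_sum_Icc_sub_mul_card_filter_le t e g he, hst]
  gcongr with k hk
  · exact sub_nonneg.mpr (hg k hk)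
  · exact hcount k hk

end Finset

namespace SimpleGraph

variable {V : Type*} {G : SimpleGraph V}

theorem Walk.le_add_length_of_adj {f : V → ℕ} (hf : ∀ a b, G.Adj a b → f b ≤ f a + 1) :
    ∀ {a b : V} (p : G.Walk a b), f b ≤ f a + p.length
  | _, _, .nil => by simp
  | _, _, .cons h q => by
    have := hf _ _ h
    have := q.le_add_length_of_adj hf
    rw [length_cons]; omega

theorem Walk.exists_mem_support_eq_of_adj {f : V → ℕ} (hf : ∀ a b, G.Adj a b → f b ≤ f a + 1)
    {i : ℕ} : ∀ {a b : V} (p : G.Walk a b), f a ≤ i → i ≤ f b → ∃ x ∈ p.support, f x = i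
  | _, _, .nil, ha, hb => ⟨_, by simp, le_antisymm ha hb⟩
  | a, _, .cons (v := c) h q, ha, hb => by
    by_cases hc : f c ≤ i
    · obtain ⟨x, hx, hxi⟩ := q.exists_mem_support_eq_of_adj hf hc hb
      exact ⟨x, by simp [hx], hxi⟩
    · exact ⟨a, by simp, by have := hf _ _ h; omega⟩

theorem dist_le_dist_add_one_of_adj (u : V) {a b : V} (h : G.Adj a b) :
    G.dist u b ≤ G.dist u a + 1 := by
  rcases h.diff_dist_adj (u := u) with h | h | h <;> omega

theorem exists_pair_dist_eq_of_lt_dist (htwo : ∀ v : V, (G.induce ({v}ᶜ : Set V)).Connected)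
    {u v : V} {i : ℕ} (hi : 1 ≤ i) (hiv : i < G.dist u v) :
    ∃ x y : V, x ≠ y ∧ G.dist u x = i ∧ G.dist u y = i := by
  obtain ⟨p, -⟩ := exists_walk_of_dist_ne_zero (G := G) (u := u) (v := v) (by omega)
  obtain ⟨x, -, hx⟩ := p.exists_mem_support_eq_of_adj (fun _ _ => dist_le_dist_add_one_of_adj u)
    (by simp) hiv.le
  have hux : u ≠ x := by rintro rfl; rw [dist_self] at hx; omega
  have hvx : v ≠ x := by rintro rfl; omega
  obtain ⟨q⟩ := (htwo x).preconnected ⟨u, hux⟩ ⟨v, hvx⟩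
  obtain ⟨y, -, hy⟩ := q.exists_mem_support_eq_of_adj (f := fun y : ({x}ᶜ : Set V) => G.dist u y)
    (fun _ _ h => dist_le_dist_add_one_of_adj u h) (by simp) hiv.le
  exact ⟨x, y, fun h => y.prop h.symm, hx, hy⟩

theorem Connected.dist_le_card_sub_one [Fintype V] (hconn : G.Connected) (u v : V) :
    G.dist u v ≤ Fintype.card V - 1 := by
  obtain ⟨p, hp, hlen⟩ := hconn.exists_path_of_dist u v
  have := hp.length_lt
  omega

theorem min_two_mul_le_card_filter_dist_le [Fintype V] [DecidableEq V] (hconn : G.Connected)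
    (htwo : ∀ v : V, (G.induce ({v}ᶜ : Set V)).Connected) (u : V) (k : ℕ) :
    min (2 * k) (Fintype.card V - 1) ≤ #{v ∈ univ.erase u | G.dist u v ≤ k} := by
  by_cases hall : ∀ v ∈ univ.erase u, G.dist u v ≤ k
  · rw [filter_true_of_mem hall, card_erase_of_mem (mem_univ u), card_univ]
    exact min_le_right _ _
  push Not at hall
  obtain ⟨v, -, hkv⟩ := hall
  set ball := {w ∈ univ.erase u | G.dist u w ≤ k}
  have hsphere : ∀ i ∈ Icc 1 k, 2 ≤ #{w ∈ ball | G.dist u w = i} := by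
    intro i hi
    rw [mem_Icc] at hi
    obtain ⟨x, y, hxy, hx, hy⟩ := exists_pair_dist_eq_of_lt_dist htwo hi.1 (hi.2.trans_lt hkv)
    have hmem : ∀ w, G.dist u w = i → w ∈ {w ∈ ball | G.dist u w = i} := by
      intro w hw
      simp only [ball, mem_filter, mem_erase, mem_univ]
      refine ⟨⟨⟨?_, trivial⟩, by omega⟩, hw⟩
      rintro rfl; rw [dist_self] at hw; omega
    exact one_lt_card.mpr ⟨x, hmem x hx, y, hmem y hy, hxy⟩
  calc min (2 * k) (Fintype.card V - 1) ≤ ∑ _i ∈ Icc 1 k, 2 := by simp [mul_comm]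
    _ ≤ _ := sum_le_sum hsphere
    _ = #ball := (card_eq_sum_card_fiberwise fun w hw => by
        simp only [ball, coe_filter, Set.mem_ofPred_eq, mem_erase] at hw
        simp only [coe_Icc, Set.mem_Icc]
        exact ⟨hconn.pos_dist_of_ne hw.1.1.symm, hw.2⟩).symm

end SimpleGraph

theorem Fin.min_val_le_min_val_add_one {n : ℕ} {x y : Fin n}
    (h : (x - y).val = 1 ∨ (y - x).val = 1) :
    min y.val (n - y.val) ≤ min x.val (n - x.val) + 1 := by
  have := x.isLt
  have := y.isLt
  rcases lt_trichotomy x y with hxy | rfl | hxy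
  · rw [Fin.coe_sub_iff_lt.mpr hxy, Fin.coe_sub_iff_le.mpr hxy.le] at h
    have := Fin.lt_def.mp hxy
    omega
  · omega
  · rw [Fin.coe_sub_iff_lt.mpr hxy, Fin.coe_sub_iff_le.mpr hxy.le] at h
    have := Fin.lt_def.mp hxy
    omega

namespace SimpleGraph

open Fin.NatCast

variable {n : ℕ} [NeZero n]

theorem cycleGraph_dist_add_one_le (w : Fin n) : (cycleGraph n).dist w (w + 1) ≤ 1 := by
  rcases n with _ | _ | m
  · exact (NeZero.ne 0 rfl).elim
  · simp [Fin.fin_one_eq_zero]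
  · exact (dist_eq_one_iff_adj.mpr (cycleGraph_adj.mpr (.inr (add_sub_cancel_left w 1)))).le

theorem cycleGraph_dist_add_natCast_le (u : Fin n) (k : ℕ) :
    (cycleGraph n).dist u (u + (k : Fin n)) ≤ k := by
  induction k with
  | zero => simp
  | succ k ih =>
    have := (cycleGraph_preconnected u (u + (k : Fin n))).dist_triangle_left (u + k + 1)
    have := cycleGraph_dist_add_one_le (u + (k : Fin n))
    rw [Nat.cast_succ, ← add_assoc]
    omega

theorem cycleGraph_dist (u v : Fin n) :
    (cycleGraph n).dist u v = min (v - u).val (n - (v - u).val) := by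
  apply le_antisymm
  · have hfwd := cycleGraph_dist_add_natCast_le u (v - u).val
    have hbwd := cycleGraph_dist_add_natCast_le v (u - v).val
    rw [Fin.cast_val_eq_self, add_sub_cancel] at hfwd hbwd
    rw [dist_comm] at hbwd
    have := (v - u).isLt
    rcases eq_or_ne u v with rfl | huv
    · simp
    have : (u - v).val = n - (v - u).val := by
      rcases lt_or_gt_of_ne huv with h | h
      · rw [Fin.coe_sub_iff_le.mpr h.le, Fin.coe_sub_iff_lt.mpr h]; omega
      · rw [Fin.coe_sub_iff_lt.mpr h, Fin.coe_sub_iff_le.mpr h.le]; have := Fin.lt_def.mp h; omega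
    omega
  · obtain ⟨p, hp⟩ := (cycleGraph_preconnected u v).exists_walk_length_eq_dist
    have := p.le_add_length_of_adj (f := fun w => min (w - u).val (n - (w - u).val))
      (fun a b h => Fin.min_val_le_min_val_add_one (by
        rwa [sub_sub_sub_cancel_right, sub_sub_sub_cancel_right, ← cycleGraph_adj']))
    simpa [hp] using this

theorem sum_erase_cycleGraph_dist {M : Type*} [AddCommMonoid M] (g : ℕ → M) (u : Fin n) :
    ∑ v ∈ univ.erase u, g ((cycleGraph n).dist u v) = ∑ i ∈ Icc 1 (n - 1), g (min i (n - i)) := by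
  refine sum_nbij' (fun v => (v - u).val) (fun i => u + Fin.ofNat n i) ?_ ?_ ?_ ?_ ?_
  · intro v hv
    have := (v - u).isLt
    have : (v - u).val ≠ 0 := by
      simpa [Fin.ext_iff, sub_eq_zero] using (mem_erase.mp hv).1
    simp only [mem_Icc]
    omega
  · intro i hi
    rw [mem_Icc] at hi
    refine mem_erase.mpr ⟨fun h => ?_, mem_univ _⟩
    have := congrArg Fin.val (add_eq_left.mp h)
    simp only [Fin.ofNat_eq_cast, Fin.val_natCast, Nat.mod_eq_of_lt (show i < n by omega),
      Fin.coe_ofNat_eq_mod, Nat.zero_mod] at this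
    omega
  · intro v _
    simp
  · intro i hi
    simp only [mem_Icc] at hi
    simp [Nat.mod_eq_of_lt (show i < n by omega)]
  · intro v _
    rw [cycleGraph_dist]

end SimpleGraph

theorem card_filter_min_sub_le (n k : ℕ) :
    #{i ∈ Icc 1 (n - 1) | min i (n - i) ≤ k} ≤ min (2 * k) (n - 1) := by
  refine le_min ?_ ((card_filter_le _ _).trans (by simp))
  calc #{i ∈ Icc 1 (n - 1) | min i (n - i) ≤ k} ≤ #(Icc 1 k ∪ Ico (n - k) n) := by
        refine card_le_card fun i hi => ?_
        simp only [mem_filter, mem_Icc, mem_Ico, mem_union] at hi ⊢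
        omega
    _ ≤ 2 * k := by
        grw [card_union_le, Nat.card_Icc, Nat.card_Ico]
        omega

theorem sum_Icc_min_sub_eq {M : Type*} [AddCommMonoid M] (g : ℕ → M) (n : ℕ) :
    ∑ i ∈ Icc 1 (n - 1), g (min i (n - i))
      = ∑ i ∈ Icc 1 (n / 2), g i + ∑ i ∈ Icc 1 ((n - 1) / 2), g i := by
  have hIoc (m : ℕ) : Icc 1 m = Ioc 0 m := Icc_add_one_left_eq_Ioc 0 m
  rw [hIoc, ← sum_Ioc_consecutive _ (Nat.zero_le (n / 2)) (show n / 2 ≤ n - 1 by omega), hIoc,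
    hIoc]
  congr 1
  · refine sum_congr rfl fun i hi => ?_
    rw [mem_Ioc] at hi
    rw [min_eq_left (by omega)]
  · refine sum_nbij' (n - ·) (n - ·) ?_ ?_ ?_ ?_ ?_ <;> intro i hi <;> rw [mem_Ioc] at hi
    · rw [mem_Ioc]; omega
    · rw [mem_Ioc]; omega
    · omega
    · omega
    · rw [min_eq_right (by omega)]

theorem sum_Icc_min_sub_mul_pow (lam : ℝ) {n : ℕ} (hn : n ≠ 0) :
    ∑ i ∈ Icc 1 (n - 1), (min i (n - i) : ℕ) * lam ^ min i (n - i)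
      = if Odd n then 2 * ∑ i ∈ Icc 1 ((n - 1) / 2), (i : ℝ) * lam ^ i
        else 2 * (∑ i ∈ Icc 1 ((n - 2) / 2), (i : ℝ) * lam ^ i)
          + ((n : ℝ) / 2) * lam ^ (n / 2) := by
  rw [sum_Icc_min_sub_eq (fun i => (i : ℝ) * lam ^ i)]
  split_ifs with hodd
  · obtain ⟨m, rfl⟩ := hodd
    rw [show (2 * m + 1) / 2 = m by omega, show (2 * m + 1 - 1) / 2 = m by omega]
    ring
  · obtain ⟨m, rfl⟩ := Nat.not_odd_iff_even.mp hodd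
    obtain ⟨k, rfl⟩ := Nat.exists_eq_succ_of_ne_zero (by omega : m ≠ 0)
    rw [show (k + 1 + (k + 1)) / 2 = k + 1 by omega, show (k + 1 + (k + 1) - 1) / 2 = k by omega,
      show (k + 1 + (k + 1) - 2) / 2 = k by omega, sum_Icc_succ_top (by omega)]
    push_cast
    ring

theorem tExp_eq_sum {V : Type*} [Fintype V] [DecidableEq V] (G : SimpleGraph V) (lam : ℝ)
    (u : V) :
    tExp G lam u = ∑ v ∈ univ.erase u, (G.dist u v : ℝ) * lam ^ G.dist u v := by
  unfold tExp
  congr!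

theorem tExp_cycleGraph {n : ℕ} [NeZero n] (lam : ℝ) (u : Fin n) :
    tExp (cycleGraph n) lam u = ∑ i ∈ Icc 1 (n - 1), (min i (n - i) : ℕ) * lam ^ min i (n - i) :=
  (tExp_eq_sum _ lam u).trans (sum_erase_cycleGraph_dist (fun d => (d : ℝ) * lam ^ d) u)

theorem succ_mul_pow_succ_le {lam : ℝ} (h0 : 0 ≤ lam) (h2 : lam ≤ 1 / 2) {k : ℕ} (hk : 1 ≤ k) :
    ((k + 1 : ℕ) : ℝ) * lam ^ (k + 1) ≤ k * lam ^ k := by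
  have hk' : (1 : ℝ) ≤ k := by exact_mod_cast hk
  have : ((k : ℝ) + 1) * lam ≤ k := by nlinarith
  rw [pow_succ, Nat.cast_succ, mul_comm (lam ^ k), ← mul_assoc]
  exact mul_le_mul_of_nonneg_right this (pow_nonneg h0 k)

theorem sum_Icc_min_sub_mul_pow_le_tExp {V : Type*} [Fintype V] {G : SimpleGraph V}
    (hconn : G.Connected) (htwo : ∀ v : V, (G.induce ({v}ᶜ : Set V)).Connected)
    {lam : ℝ} (h0 : 0 ≤ lam) (h2 : lam ≤ 1 / 2) (u : V) :
    ∑ i ∈ Icc 1 (Fintype.card V - 1), (min i (Fintype.card V - i) : ℕ) *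
        lam ^ min i (Fintype.card V - i) ≤ tExp G lam u := by
  classical
  rw [tExp_eq_sum]
  refine sum_comp_le_sum_comp_of_card_filter_le (g := fun d => (d : ℝ) * lam ^ d)
    (N := Fintype.card V - 1)
    (fun k hk => succ_mul_pow_succ_le h0 h2 (mem_Icc.mp hk).1) (fun i hi => ?_) (fun v hv => ?_)
    (by simp) (fun k _ => (card_filter_min_sub_le _ k).trans
      (min_two_mul_le_card_filter_dist_le hconn htwo u k))
  · rw [mem_Icc] at hi ⊢
    omega
  · exact mem_Icc.mpr ⟨hconn.pos_dist_of_ne (mem_erase.mp hv).1.symm,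
      hconn.dist_le_card_sub_one u v⟩

theorem stmt9_general {V : Type*} [Fintype V] (G : SimpleGraph V)
    (hconn : G.Connected)
    (htwo : ∀ v : V, (G.induce ({v}ᶜ : Set V)).Connected)
    (n : ℕ) (hn : n = Fintype.card V)
    (lam : ℝ) (h0 : 0 < lam) (h2 : lam < 1 / 2) :
    (if Odd n then 2 * ∑ i ∈ Finset.Icc 1 ((n - 1) / 2), (i : ℝ) * lam ^ i
     else 2 * (∑ i ∈ Finset.Icc 1 ((n - 2) / 2), (i : ℝ) * lam ^ i)
          + ((n : ℝ) / 2) * lam ^ (n / 2))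
      ≤ Finset.univ.sup' (Finset.univ_nonempty_iff.mpr hconn.nonempty) (tExp G lam) ∧
    (∀ u : Fin n,
      tExp (SimpleGraph.cycleGraph n) lam u =
        (if Odd n then 2 * ∑ i ∈ Finset.Icc 1 ((n - 1) / 2), (i : ℝ) * lam ^ i
         else 2 * (∑ i ∈ Finset.Icc 1 ((n - 2) / 2), (i : ℝ) * lam ^ i)
              + ((n : ℝ) / 2) * lam ^ (n / 2))) := by
  refine ⟨?_, fun u => ?_⟩
  · obtain ⟨u⟩ := hconn.nonempty
    rw [← sum_Icc_min_sub_mul_pow lam (hn ▸ (Fintype.card_pos_iff.mpr ⟨u⟩).ne'), hn]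
    exact (sum_Icc_min_sub_mul_pow_le_tExp hconn htwo h0.le h2.le u).trans
      (le_sup' _ (mem_univ u))
  · have := u.neZero
    rw [tExp_cycleGraph, sum_Icc_min_sub_mul_pow lam (NeZero.ne n)]

theorem stmt9 {V : Type*} [Fintype V] (G : SimpleGraph V)
    (hconn : G.Connected)
    (htwo : ∀ v : V, (G.induce ({v}ᶜ : Set V)).Connected)
    (n : ℕ) (hn : n = Fintype.card V) (h3 : 3 ≤ n)
    (lam : ℝ) (h0 : 0 < lam) (h2 : lam < 1 / 2) :
    (if Odd n then 2 * ∑ i ∈ Finset.Icc 1 ((n - 1) / 2), (i : ℝ) * lam ^ i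
     else 2 * (∑ i ∈ Finset.Icc 1 ((n - 2) / 2), (i : ℝ) * lam ^ i)
          + ((n : ℝ) / 2) * lam ^ (n / 2))
      ≤ Finset.univ.sup' (Finset.univ_nonempty_iff.mpr hconn.nonempty) (tExp G lam) ∧
    (∀ u : Fin n,
      tExp (SimpleGraph.cycleGraph n) lam u =
        (if Odd n then 2 * ∑ i ∈ Finset.Icc 1 ((n - 1) / 2), (i : ℝ) * lam ^ i
         else 2 * (∑ i ∈ Finset.Icc 1 ((n - 2) / 2), (i : ℝ) * lam ^ i)
              + ((n : ℝ) / 2) * lam ^ (n / 2))) :=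
  stmt9_general G hconn htwo n hn lam h0 h2
end

section
/- For every finite simple connected graph G on n vertices and λ ∈ (0,1), every vertex u satisfies c_λ(u) ≥ Σ_{v≠u} λ^{d(u,v)} ≥ Σ_{i=1}^{n−1} λ^i; hence mc_λ(G) = min_u c_λ(u) ≥ Σ_{i=1}^{n−1} λ^i, with equality attained at an end-vertex of the path P_n. -/
open SimpleGraph Finset

/-!
Every shortest `u`–`l` path with `l ≠ u` leaves `u` through exactly one edge, so summing the shares
of the edges at `u` over the ordered pairs `(u, l)` and `(l, u)` gives `2 λ ^ d(u, l)`; the factor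
`1 / 2` in the edge betweenness cancels the `2`, and the pairs avoiding `u` only add nonnegative
terms. The distances from `u` take every value between `1` and their maximum, so the `i`-th closest
vertex other than `u` is at distance at most `i`, which gives the second bound. No shortest path
between two other vertices of a path graph passes through an end-vertex, so there the nonnegative
terms vanish and equality holds.
-/

theorem Finset.sum_sum_eq_add_sum_erase {ι M : Type*} [Fintype ι] [DecidableEq ι]
    [AddCommMonoid M] (F : ι → ι → M) (u : ι) :
    ∑ k, ∑ l, F k l = F u u + ∑ l ∈ univ.erase u, (F u l + F l u)
      + ∑ k ∈ univ.erase u, ∑ l ∈ univ.erase u, F k l := by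
  simp_rw [← add_sum_erase univ _ (mem_univ u), sum_add_distrib]
  abel

theorem Finset.sum_Icc_pow_le_sum_pow {ι R : Type*} [DecidableEq ι] [Semiring R] [PartialOrder R]
    [IsOrderedRing R] (s : Finset ι) (f : ι → ℕ) (hf : ∀ v ∈ s, Icc 1 (f v) ⊆ s.image f)
    {a : R} (h0 : 0 ≤ a) (h1 : a ≤ 1) :
    ∑ i ∈ Icc 1 #s, a ^ i ≤ ∑ v ∈ s, a ^ f v := by
  induction s using Finset.induction_on_max_value f with
  | empty => simp
  | insert w s hws hmax ih =>
    have hs : ∀ v ∈ s, Icc 1 (f v) ⊆ s.image f := by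
      intro v hv i hi
      obtain ⟨x, hx, rfl⟩ := mem_image.mp (hf v (mem_insert_of_mem hv) hi)
      rcases mem_insert.mp hx with rfl | hx
      · exact mem_image.mpr ⟨v, hv, le_antisymm (hmax v hv) (mem_Icc.mp hi).2⟩
      · exact mem_image_of_mem f hx
    have hw : f w ≤ #s + 1 :=
      calc f w = #(Icc 1 (f w)) := by simp
        _ ≤ #((insert w s).image f) := card_le_card (hf w (mem_insert_self w s))
        _ ≤ #(insert w s) := card_image_le
        _ = #s + 1 := card_insert_of_notMem hws
    rw [card_insert_of_notMem hws, sum_Icc_succ_top (by omega), sum_insert hws, add_comm]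
    exact add_le_add (pow_le_pow_of_le_one h0 h1 hw) (ih hs)

namespace SimpleGraph

variable {V : Type*} {G : SimpleGraph V}

theorem Reachable.exists_dist_eq_of_le {u w : V} (h : G.Reachable u w) {i : ℕ}
    (hi : i ≤ G.dist u w) : ∃ x, G.dist u x = i := by
  obtain ⟨p, hp⟩ := h.exists_walk_length_eq_dist
  refine ⟨p.getVert i, ?_⟩
  rw [← length_eq_dist_of_subwalk hp (p.isSubwalk_take i), Walk.take_length]
  omega

theorem Walk.dist_add_dist_le_length {u v w : V} (p : G.Walk u v) (hw : w ∈ p.support) :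
    G.dist u w + G.dist w v ≤ p.length := by
  classical
  rw [← p.take_spec hw, Walk.length_append]
  exact add_le_add (dist_le _) (dist_le _)

theorem Walk.IsPath.filter_mem_edges_neighborFinset [DecidableEq V] {u l : V}
    [Fintype (G.neighborSet u)] {p : G.Walk u l} (hp : p.IsPath) (hul : u ≠ l) :
    {v ∈ G.neighborFinset u | s(u, v) ∈ p.edges} = {p.snd} := by
  cases p with
  | nil => exact absurd rfl hul
  | cons h q =>
    rw [Walk.cons_isPath_iff] at hp
    ext v
    simp only [mem_filter, mem_neighborFinset, mem_singleton, Walk.edges_cons, List.mem_cons,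
      Walk.snd_cons]
    constructor
    · rintro ⟨hadj, hcase | hmem⟩
      · rw [Sym2.eq_iff] at hcase
        rcases hcase with ⟨-, rfl⟩ | ⟨rfl, rfl⟩
        · rfl
        · exact absurd rfl h.ne
      · exact absurd (q.fst_mem_support_of_mem_edges hmem) hp.2
    · rintro rfl
      exact ⟨h, Or.inl rfl⟩

theorem Connected.sum_Icc_pow_le_sum_pow_dist [Fintype V] [DecidableEq V] {R : Type*}
    [Semiring R] [PartialOrder R] [IsOrderedRing R] (hG : G.Connected)
    {a : R} (h0 : 0 ≤ a) (h1 : a ≤ 1) (u : V) :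
    ∑ i ∈ Icc 1 (Fintype.card V - 1), a ^ i ≤ ∑ v ∈ univ.erase u, a ^ G.dist u v := by
  rw [← card_univ, ← card_erase_of_mem (mem_univ u)]
  refine sum_Icc_pow_le_sum_pow _ _ (fun v _ i hi ↦ ?_) h0 h1
  obtain ⟨x, hx⟩ := (hG.preconnected u v).exists_dist_eq_of_le (mem_Icc.mp hi).2
  have hxu : x ≠ u := by
    rintro rfl
    simp [← hx] at hi
  exact mem_image.mpr ⟨x, mem_erase.mpr ⟨hxu, mem_univ x⟩, hx⟩

section LocallyFinite

variable [DecidableEq V] [G.LocallyFinite]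

theorem card_filter_finsetWalkLength_comm (P : List (Sym2 V) → Prop) [DecidablePred P]
    (hP : ∀ es, P es.reverse ↔ P es) (n : ℕ) (k l : V) :
    #{p ∈ G.finsetWalkLength n k l | P p.edges} = #{p ∈ G.finsetWalkLength n l k | P p.edges} :=
  card_nbij' Walk.reverse Walk.reverse
    (fun p hp ↦ by simp_all [mem_finsetWalkLength_iff])
    (fun p hp ↦ by simp_all [mem_finsetWalkLength_iff])
    (fun p _ ↦ p.reverse_reverse) (fun p _ ↦ p.reverse_reverse)

theorem sum_card_filter_mem_edges_neighborFinset {u l : V} (hul : u ≠ l) :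
    ∑ v ∈ G.neighborFinset u, #{p ∈ G.finsetWalkLength (G.dist u l) u l | s(u, v) ∈ p.edges} =
      #(G.finsetWalkLength (G.dist u l) u l) := by
  have := sum_card_bipartiteAbove_eq_sum_card_bipartiteBelow
    (fun v (p : G.Walk u l) ↦ s(u, v) ∈ p.edges) (s := G.neighborFinset u)
    (t := G.finsetWalkLength (G.dist u l) u l)
  simp only [bipartiteAbove] at this
  rw [this, card_eq_sum_ones]
  refine sum_congr rfl fun p hp ↦ ?_
  rw [mem_finsetWalkLength_iff] at hp
  simp [bipartiteBelow, (p.isPath_of_length_eq_dist hp).filter_mem_edges_neighborFinset hul]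

end LocallyFinite

variable {m : ℕ}

theorem pathGraph_sub_le_length {a b : Fin m} (p : (pathGraph m).Walk a b) :
    (b : ℕ) - a ≤ p.length := by
  induction p with
  | nil => simp
  | cons h _ ih =>
    rw [pathGraph_adj] at h
    rw [Walk.length_cons]
    omega

theorem pathGraph_dist_of_le {a b : Fin m} (hab : a ≤ b) : (pathGraph m).dist a b = b - a := by
  obtain ⟨p, hp⟩ := (pathGraph_preconnected m a b).exists_walk_length_eq_dist
  refine le_antisymm ?_ (hp ▸ pathGraph_sub_le_length p)
  suffices h : ∀ d (c : Fin m), (a : ℕ) + d = c → (pathGraph m).dist a c ≤ d by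
    exact h _ b (by omega)
  intro d
  induction d with
  | zero =>
    intro c hc
    simp [show a = c from Fin.ext (by omega)]
  | succ d ih =>
    intro c hc
    let c' : Fin m := ⟨a + d, by omega⟩
    have hadj : (pathGraph m).Adj c' c := pathGraph_adj.mpr (Or.inl (by simp [c']; omega))
    calc (pathGraph m).dist a c ≤ (pathGraph m).dist a c' + (pathGraph m).dist c' c :=
          (pathGraph_preconnected m a c').dist_triangle_left c
      _ ≤ d + 1 := add_le_add (ih c' rfl) (dist_eq_one_iff_adj.mpr hadj).le

theorem pathGraph_notMem_support {k l z : Fin m} (hk : z < k) (hl : z < l)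
    (p : (pathGraph m).Walk k l) (hp : p.length = (pathGraph m).dist k l) : z ∉ p.support := by
  intro hz
  have hlen := p.dist_add_dist_le_length hz
  rw [dist_comm, pathGraph_dist_of_le hk.le, pathGraph_dist_of_le hl.le, hp] at hlen
  rcases le_total k l with h | h
  · rw [pathGraph_dist_of_le h] at hlen
    omega
  · rw [dist_comm, pathGraph_dist_of_le h] at hlen
    omega

end SimpleGraph

section ShortestPaths

variable {V : Type*} [Fintype V] {G : SimpleGraph V}

theorem numSP_comm (k l : V) : numSP G k l = numSP G l k := by
  let := Classical.decEq V
  let := Classical.decRel G.Adj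
  unfold numSP
  rw [dist_comm]
  simpa using card_filter_finsetWalkLength_comm (G := G) (fun _ ↦ True) (by simp) _ k l

theorem numSPedge_comm (u v k l : V) : numSPedge G u v k l = numSPedge G u v l k := by
  let := Classical.decEq V
  let := Classical.decRel G.Adj
  unfold numSPedge
  rw [dist_comm]
  exact card_filter_finsetWalkLength_comm (fun es ↦ s(u, v) ∈ es) (by simp) _ k l

theorem numSP_pos {k l : V} (h : G.Reachable k l) : 0 < numSP G k l := by
  let := Classical.decEq V
  let := Classical.decRel G.Adj
  obtain ⟨p, hp⟩ := h.exists_walk_length_eq_dist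
  unfold numSP
  exact card_pos.mpr ⟨p, mem_finsetWalkLength_iff.mpr hp⟩

theorem numSPedge_self (u v k : V) : numSPedge G u v k k = 0 := by
  let := Classical.decEq V
  let := Classical.decRel G.Adj
  unfold numSPedge
  rw [card_eq_zero, filter_eq_empty_iff]
  intro p hp
  rw [mem_finsetWalkLength_iff, SimpleGraph.dist_self, Walk.length_eq_zero_iff] at hp
  simp [Walk.edges_eq_nil.mpr hp]

theorem sum_numSPedge_neighborFinset [DecidableRel G.Adj] {u l : V} (hul : u ≠ l) :
    ∑ v ∈ G.neighborFinset u, numSPedge G u v u l = numSP G u l := by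
  let := Classical.decEq V
  let := Classical.decRel G.Adj
  unfold numSPedge numSP
  convert sum_card_filter_mem_edges_neighborFinset (G := G) hul

end ShortestPaths

noncomputable def bExpSummand {V : Type*} [Fintype V] (G : SimpleGraph V) (lam : ℝ)
    (u v k l : V) : ℝ :=
  ((numSPedge G u v k l : ℝ) / (numSP G k l)) * lam ^ (G.dist k l)

section EdgeBetweenness

variable {V : Type*} [Fintype V] {G : SimpleGraph V} (lam : ℝ)

theorem bExp_eq_sum_bExpSummand (u v : V) :
    bExp G lam u v = 1 / 2 * ∑ k, ∑ l, bExpSummand G lam u v k l :=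
  rfl

theorem bExpSummand_comm (u v k l : V) : bExpSummand G lam u v k l = bExpSummand G lam u v l k := by
  rw [bExpSummand, bExpSummand, numSPedge_comm, numSP_comm, dist_comm]

theorem bExpSummand_self (u v k : V) : bExpSummand G lam u v k k = 0 := by
  simp [bExpSummand, numSPedge_self]

theorem bExpSummand_nonneg (h : 0 ≤ lam) (u v k l : V) : 0 ≤ bExpSummand G lam u v k l := by
  unfold bExpSummand
  positivity

theorem sum_bExpSummand_neighborFinset [DecidableRel G.Adj] (hG : G.Connected) {u l : V}
    (hul : u ≠ l) : ∑ v ∈ G.neighborFinset u, bExpSummand G lam u v u l = lam ^ G.dist u l := by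
  have hpos : (numSP G u l : ℝ) ≠ 0 := Nat.cast_ne_zero.mpr (numSP_pos (hG.preconnected u l)).ne'
  simp_rw [bExpSummand, ← sum_mul, ← sum_div, ← Nat.cast_sum, sum_numSPedge_neighborFinset hul,
    div_self hpos, one_mul]

theorem bExp_eq_add [DecidableEq V] (u v : V) :
    bExp G lam u v = ∑ l ∈ univ.erase u, bExpSummand G lam u v u l
      + (∑ k ∈ univ.erase u, ∑ l ∈ univ.erase u, bExpSummand G lam u v k l) / 2 := by
  have hsym (l : V) :
      bExpSummand G lam u v u l + bExpSummand G lam u v l u = 2 * bExpSummand G lam u v u l := by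
    rw [bExpSummand_comm lam u v l u]
    ring
  rw [bExp_eq_sum_bExpSummand, sum_sum_eq_add_sum_erase _ u, bExpSummand_self,
    sum_congr rfl fun l _ ↦ hsym l, ← mul_sum]
  ring

theorem cExp_eq_add [DecidableEq V] [DecidableRel G.Adj] (hG : G.Connected) (u : V) :
    cExp G lam u = ∑ l ∈ univ.erase u, lam ^ G.dist u l
      + ∑ v ∈ G.neighborFinset u,
          (∑ k ∈ univ.erase u, ∑ l ∈ univ.erase u, bExpSummand G lam u v k l) / 2 := by
  calc cExp G lam u = ∑ v ∈ G.neighborFinset u, bExp G lam u v := by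
        unfold cExp
        convert rfl
    _ = _ := by
        simp_rw [bExp_eq_add, sum_add_distrib]
        rw [sum_comm]
        congr 1
        exact sum_congr rfl fun l hl ↦
          sum_bExpSummand_neighborFinset lam hG (ne_of_mem_erase hl).symm

theorem sum_pow_dist_le_cExp [DecidableEq V] (hG : G.Connected) (h0 : 0 ≤ lam) (u : V) :
    ∑ v ∈ univ.erase u, lam ^ G.dist u v ≤ cExp G lam u := by
  classical
  rw [cExp_eq_add lam hG]
  refine le_add_of_nonneg_right (sum_nonneg fun v _ ↦ div_nonneg ?_ zero_le_two)
  exact sum_nonneg fun k _ ↦ sum_nonneg fun l _ ↦ bExpSummand_nonneg lam h0 u v k l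

end EdgeBetweenness

theorem numSPedge_pathGraph_eq_zero {m : ℕ} {z v k l : Fin m} (hk : z < k) (hl : z < l) :
    numSPedge (pathGraph m) z v k l = 0 := by
  let := Classical.decEq (Fin m)
  let := Classical.decRel (pathGraph m).Adj
  unfold numSPedge
  rw [card_eq_zero, filter_eq_empty_iff]
  intro p hp he
  rw [mem_finsetWalkLength_iff] at hp
  exact pathGraph_notMem_support hk hl p hp (p.fst_mem_support_of_mem_edges he)

theorem cExp_pathGraph_zero (lam : ℝ) {m : ℕ} (hm : 0 < m) :
    cExp (pathGraph m) lam ⟨0, hm⟩ = ∑ i ∈ Icc 1 (m - 1), lam ^ i := by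
  classical
  have hG : (pathGraph m).Connected := by
    obtain ⟨k, rfl⟩ := Nat.exists_eq_add_one_of_ne_zero hm.ne'
    exact pathGraph_connected k
  have hpos {v : Fin m} (hv : v ∈ univ.erase ⟨0, hm⟩) : (⟨0, hm⟩ : Fin m) < v :=
    Fin.lt_def.mpr (Nat.pos_of_ne_zero (Fin.val_ne_iff.mpr (ne_of_mem_erase hv)))
  have hrest (v : Fin m) :
      ∑ k ∈ univ.erase ⟨0, hm⟩, ∑ l ∈ univ.erase ⟨0, hm⟩,
        bExpSummand (pathGraph m) lam ⟨0, hm⟩ v k l = 0 :=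
    sum_eq_zero fun k hk ↦ sum_eq_zero fun l hl ↦ by
      simp [bExpSummand, numSPedge_pathGraph_eq_zero (hpos hk) (hpos hl)]
  simp only [cExp_eq_add lam hG, hrest, zero_div, sum_const_zero, add_zero]
  refine sum_bij (fun v _ ↦ (v : ℕ)) (fun v hv ↦ ?_) (fun v _ w _ h ↦ Fin.ext h)
    (fun i hi ↦ ?_) (fun v hv ↦ ?_)
  · have := hpos hv
    rw [Fin.lt_def] at this
    simp only [mem_Icc]
    omega
  · rw [mem_Icc] at hi
    refine ⟨⟨i, by omega⟩, mem_erase.mpr ⟨fun h ↦ ?_, mem_univ _⟩, rfl⟩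
    simp only [Fin.mk.injEq] at h
    omega
  · rw [pathGraph_dist_of_le (hpos hv).le]
    simp

theorem stmt11 {V : Type*} [Fintype V] [DecidableEq V] (G : SimpleGraph V)
    (hG : G.Connected) (n : ℕ) (hn : n = Fintype.card V)
    (lam : ℝ) (h0 : 0 < lam) (h1 : lam < 1) :
    (∀ u : V, (∑ v ∈ Finset.univ.erase u, lam ^ (G.dist u v)) ≤ cExp G lam u) ∧
    (∀ u : V, (∑ i ∈ Finset.Icc 1 (n - 1), lam ^ i) ≤ cExp G lam u) ∧
    (∀ m : ℕ, ∀ hm : 2 ≤ m,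
      cExp (SimpleGraph.pathGraph m) lam (⟨0, by omega⟩ : Fin m)
        = ∑ i ∈ Finset.Icc 1 (m - 1), lam ^ i) := by
  refine ⟨sum_pow_dist_le_cExp lam hG h0.le, fun u ↦ ?_, fun m hm ↦ cExp_pathGraph_zero lam _⟩
  subst hn
  exact (hG.sum_Icc_pow_le_sum_pow_dist h0.le h1.le u).trans (sum_pow_dist_le_cExp lam hG h0.le u)
end
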